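/- Let X and Y be finite alphabets, 𝒜 a finite set of functions A : Xⁿ → X^{l_A}, and p_A a probability distribution on 𝒜 satisfying condition (H4) with constants α_A, β_A ≥ 0. Then for every x ∈ Xⁿ and y ∈ Yⁿ, p_A({A : ∃ x' ≠ x with Ax' = Ax and H(x'|y) ≤ H(x|y)}) ≤ max{ |X|^{l_A} α_A / |Im 𝒜|, 1 } · 2^{−n(|R_A − H(x|y)|⁺ − λ_{XY})} + β_A, where R_A := l_A log|X| / n, λ_{XY} := |X||Y| log(n+1)/n, and |t|⁺ := max{t, 0}. -/

import Mathlib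

open Finset Filter

attribute [local instance] Classical.propDecidable

noncomputable section

/-- Shannon entropy (base 2) of a distribution on a finite type. -/
def ent {α : Type*} [Fintype α] (p : α → ℝ) : ℝ :=
  ∑ a, -(p a * Real.logb 2 (p a))

/-- Marginal on the first component of a joint distribution. -/
def margFst {α β : Type*} [Fintype α] [Fintype β] (p : α × β → ℝ) (a : α) : ℝ :=
  ∑ b, p (a, b)

/-- Marginal on the second component of a joint distribution. -/
def margSnd {α β : Type*} [Fintype α] [Fintype β] (p : α × β → ℝ) (b : β) : ℝ :=
  ∑ a, p (a, b)

/-- Conditional entropy H(first ∣ second) of a joint distribution. -/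
def condEnt {α β : Type*} [Fintype α] [Fintype β] (p : α × β → ℝ) : ℝ :=
  ent p - ent (margSnd p)

/-- Mutual information of a joint distribution. -/
def mutInfo {α β : Type*} [Fintype α] [Fintype β] (p : α × β → ℝ) : ℝ :=
  ent (margFst p) + ent (margSnd p) - ent p

/-- Conditional probability P(first = a ∣ second = b) of a joint distribution. -/
def condProb {α β : Type*} [Fintype α] [Fintype β] (p : α × β → ℝ) (a : α) (b : β) : ℝ :=
  p (a, b) / margSnd p b

/-- Kullback-Leibler divergence (base 2). -/
def klDiv {α : Type*} [Fintype α] (p q : α → ℝ) : ℝ :=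
  ∑ a, p a * Real.logb 2 (p a / q a)

/-- Conditional KL divergence D(p_{2|1} ‖ q ∣ p_1) computed from the joint p. -/
def condKLDiv {α β : Type*} [Fintype α] [Fintype β] (p : α × β → ℝ) (q : α → β → ℝ) : ℝ :=
  ∑ ab : α × β, p ab * Real.logb 2 (p ab / margFst p ab.1 / q ab.1 ab.2)

/-- Empirical type of a sequence. -/
def typeOf {α : Type*} [Fintype α] {n : ℕ} (x : Fin n → α) (a : α) : ℝ :=
  ((Finset.univ.filter fun i => x i = a).card : ℝ) / n

/-- Joint empirical type of a pair of sequences. -/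
def jointType {α β : Type*} [Fintype α] [Fintype β] {n : ℕ}
    (x : Fin n → α) (y : Fin n → β) (ab : α × β) : ℝ :=
  ((Finset.univ.filter fun i => x i = ab.1 ∧ y i = ab.2).card : ℝ) / n

/-- Empirical conditional entropy H(x ∣ y). -/
def empCondEnt {α β : Type*} [Fintype α] [Fintype β] {n : ℕ}
    (x : Fin n → α) (y : Fin n → β) : ℝ :=
  condEnt (jointType x y)

/-- A minimizer of `f` on `s` (arbitrary if `s` is empty). -/
def argminOn {α : Type*} [Nonempty α] (s : Finset α) (f : α → ℝ) : α :=
  if h : s.Nonempty then (s.exists_min_image f h).choose else Classical.arbitrary α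

/-- A maximizer of `f` on `s` (arbitrary if `s` is empty). -/
def argmaxOn {α : Type*} [Nonempty α] (s : Finset α) (f : α → ℝ) : α :=
  argminOn s fun a => -f a

/-- The image `Im 𝒜` of a finite family of functions. -/
def ImSet {ι κ V : Type*} [Fintype κ] (𝒜 : Finset ι) (app : ι → κ → V) : Finset V :=
  𝒜.biUnion fun A => Finset.univ.image (app A)

/-- Condition (H4) of the hash property, for a fixed block length `n`. -/
def H4Cond {U V ι : Type*} [Fintype U] {n : ℕ}
    (𝒜 : Finset ι) (app : ι → (Fin n → U) → V) (p : ι → ℝ) (a b : ℝ) : Prop :=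
  ∀ T T' : Finset (Fin n → U),
    ∑ u ∈ T, ∑ u' ∈ T', (∑ A ∈ 𝒜.filter fun A => app A u = app A u', p A)
      ≤ ((T ∩ T').card : ℝ)
        + ((T.card : ℝ) * (T'.card : ℝ) * a) / ((ImSet 𝒜 app).card : ℝ)
        + min (T.card : ℝ) (T'.card : ℝ) * b

/-- The (α,β)-hash property of an ensemble of functions. -/
def HashProperty {U : Type*} [Fintype U] {ι : ℕ → Type*} {V : ℕ → Type*}
    [∀ n, Fintype (V n)]
    (𝒜 : ∀ n, Finset (ι n)) (app : ∀ n, ι n → (Fin n → U) → V n)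
    (p : ∀ n, ι n → ℝ) (a b : ℕ → ℝ) : Prop :=
  Tendsto (fun n : ℕ =>
      Real.logb 2 ((Fintype.card (V n) : ℝ) / ((ImSet (𝒜 n) (app n)).card : ℝ)) / (n : ℝ))
    atTop (nhds 0)
  ∧ Tendsto a atTop (nhds 1)
  ∧ Tendsto b atTop (nhds 0)
  ∧ ∀ n, H4Cond (𝒜 n) (app n) (p n) (a n) (b n)

/-- An ensemble has a hash property if it is an (α,β)-hash ensemble for some α, β. -/
def HasHashProperty {U : Type*} [Fintype U] {ι : ℕ → Type*} {V : ℕ → Type*}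
    [∀ n, Fintype (V n)]
    (𝒜 : ∀ n, Finset (ι n)) (app : ∀ n, ι n → (Fin n → U) → V n)
    (p : ∀ n, ι n → ℝ) : Prop :=
  ∃ a b : ℕ → ℝ, HashProperty 𝒜 app p a b

/-- Uniform distribution on a finite subset. -/
def unifOn {V : Type*} (s : Finset V) (v : V) : ℝ :=
  if v ∈ s then 1 / (s.card : ℝ) else 0

end
section auxlemmas
open Finset
variable {X Y : Type} [Fintype X] [Fintype Y] {n : ℕ}

/-- joint count of a pair of symbols. -/
noncomputable def cnt (x : Fin n → X) (y : Fin n → Y) (ab : X × Y) : ℕ :=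
  (Finset.univ.filter fun i => x i = ab.1 ∧ y i = ab.2).card

/-- count of a symbol in y. -/
noncomputable def cntY (y : Fin n → Y) (b : Y) : ℕ :=
  (Finset.univ.filter fun i => y i = b).card

lemma sum_cnt_fst (x : Fin n → X) (y : Fin n → Y) (b : Y) :
    ∑ a, cnt x y (a, b) = cntY y b := by
  classical
  unfold cnt cntY
  rw [Finset.card_eq_sum_card_fiberwise (f := x) (t := univ) (fun i _ => mem_univ _)]
  refine Finset.sum_congr rfl fun a _ => ?_
  congr 1
  ext i
  simp [Finset.mem_filter, and_comm]

lemma sum_cntY (y : Fin n → Y) : ∑ b, cntY y b = n := by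
  classical
  unfold cntY
  rw [← Finset.card_eq_sum_card_fiberwise (f := y) (t := univ) (fun i _ => mem_univ _)]
  simp

lemma sum_cnt (x : Fin n → X) (y : Fin n → Y) : ∑ ab, cnt x y ab = n := by
  rw [Fintype.sum_prod_type_right]
  simp_rw [sum_cnt_fst]
  exact sum_cntY y

lemma cnt_le_cntY (x : Fin n → X) (y : Fin n → Y) (a : X) (b : Y) :
    cnt x y (a, b) ≤ cntY y b := by
  apply Finset.card_le_card
  intro i hi
  simp only [Finset.mem_filter] at *
  exact ⟨hi.1, hi.2.2⟩

lemma margSnd_jointType (x : Fin n → X) (y : Fin n → Y) (b : Y) :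
    margSnd (jointType x y) b = (cntY y b : ℝ) / n := by
  unfold margSnd jointType
  rw [← Finset.sum_div]
  rw [← sum_cnt_fst x y b]
  push_cast
  rfl

lemma neg_mul_logb_div (hn : (0:ℝ) < n) (c : ℕ) :
    -(((c:ℝ)/n) * Real.logb 2 ((c:ℝ)/n))
      = (-((c:ℝ) * Real.logb 2 c) + (c:ℝ) * Real.logb 2 n)/n := by
  rcases Nat.eq_zero_or_pos c with h | h
  · simp [h]
  · rw [Real.logb_div (by positivity) (by positivity)]
    ring

lemma ent_div {α : Type*} [Fintype α] (hn : 0 < n) (c : α → ℕ) (hc : ∑ a, c a = n) :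
    ent (fun a => (c a : ℝ)/n) = (-∑ a, (c a:ℝ) * Real.logb 2 (c a))/n + Real.logb 2 n := by
  have hn' : (0:ℝ) < n := by exact_mod_cast hn
  unfold ent
  simp only []
  rw [Finset.sum_congr rfl (fun a _ => neg_mul_logb_div hn' (c a))]
  rw [← Finset.sum_div, Finset.sum_add_distrib, ← Finset.sum_neg_distrib, ← Finset.sum_mul]
  have : (∑ a, (c a : ℝ)) = n := by exact_mod_cast congrArg (Nat.cast : ℕ → ℝ) hc
  rw [this]
  field_simp

lemma ece_eq (hn : 0 < n) (x : Fin n → X) (y : Fin n → Y) :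
    empCondEnt x y
      = (∑ b, (cntY y b:ℝ) * Real.logb 2 (cntY y b)
          - ∑ ab, (cnt x y ab:ℝ) * Real.logb 2 (cnt x y ab)) / n := by
  unfold empCondEnt condEnt
  have h1 : ent (jointType x y)
      = (-∑ ab, (cnt x y ab:ℝ) * Real.logb 2 (cnt x y ab))/n + Real.logb 2 n := by
    have := ent_div hn (cnt x y) (sum_cnt x y)
    convert this using 2
    funext ab; rfl
  have h2 : ent (margSnd (jointType x y))
      = (-∑ b, (cntY y b:ℝ) * Real.logb 2 (cntY y b))/n + Real.logb 2 n := by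
    have := ent_div hn (cntY y) (sum_cntY y)
    rw [← this]
    unfold ent
    exact Finset.sum_congr rfl fun b _ => by rw [margSnd_jointType]
  rw [h1, h2]
  ring

end auxlemmas
section auxlemmas2
set_option linter.unusedSectionVars false
open Finset
variable {X Y : Type} [Fintype X] [Fintype Y] {n : ℕ}

/-- conditional empirical probability as a ratio of counts. -/
noncomputable def cq (z : Fin n → X) (y : Fin n → Y) (a : X) (b : Y) : ℝ :=
  (cnt z y (a, b) : ℝ) / (cntY y b : ℝ)

lemma cq_nonneg (z : Fin n → X) (y : Fin n → Y) (a : X) (b : Y) : 0 ≤ cq z y a b := by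
  unfold cq; positivity

lemma sum_cq (z : Fin n → X) (y : Fin n → Y) (i : Fin n) :
    ∑ a, cq z y a (y i) = 1 := by
  unfold cq
  rw [← Finset.sum_div]
  rw [← Nat.cast_sum, sum_cnt_fst]
  have h : 0 < cntY y (y i) := by
    apply Finset.card_pos.2
    exact ⟨i, by simp [cntY]⟩
  rw [div_self (by exact_mod_cast h.ne')]

/-- product over positions groups into product over symbol pairs. -/
lemma prod_cq_eq (z x' : Fin n → X) (y : Fin n → Y) :
    ∏ i, cq z y (x' i) (y i) = ∏ ab : X × Y, (cq z y ab.1 ab.2) ^ (cnt x' y ab) := by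
  classical
  rw [← Finset.prod_fiberwise (univ : Finset (Fin n)) (fun i => (x' i, y i))
        (fun i => cq z y (x' i) (y i))]
  refine Finset.prod_congr rfl fun ab _ => ?_
  rw [Finset.prod_congr rfl (fun i hi => ?_), Finset.prod_const]
  · congr 1
    unfold cnt
    congr 1
    ext i
    simp [Prod.ext_iff]
  · simp only [Finset.mem_filter, Prod.ext_iff] at hi
    rw [hi.2.1, hi.2.2]

lemma sum_prod_cq (z : Fin n → X) (y : Fin n → Y) :
    ∑ x' : Fin n → X, ∏ i, cq z y (x' i) (y i) = 1 := by
  classical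
  have := Finset.prod_univ_sum (fun _ : Fin n => (univ : Finset X))
    (fun i a => cq z y a (y i))
  rw [Fintype.piFinset_univ] at this
  rw [← this]
  rw [Finset.prod_congr rfl fun i _ => sum_cq z y i]
  simp

/-- value of the product for a sequence with the same counts as z. -/
lemma prod_cq_self (hn : 0 < n) (z : Fin n → X) (y : Fin n → Y) :
    ∏ ab : X × Y, (cq z y ab.1 ab.2) ^ (cnt z y ab)
      = (2:ℝ) ^ (-(n:ℝ) * empCondEnt z y) := by
  have hn' : (0:ℝ) < n := by exact_mod_cast hn
  have key : ∀ ab : X × Y, (cq z y ab.1 ab.2) ^ (cnt z y ab)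
      = (2:ℝ) ^ ((cnt z y ab : ℝ) * Real.logb 2 (cnt z y ab)
          - (cnt z y ab : ℝ) * Real.logb 2 (cntY y ab.2)) := by
    rintro ⟨a, b⟩
    rcases Nat.eq_zero_or_pos (cnt z y (a, b)) with h | h
    · simp [h]
    · have hb : 0 < cntY y b := lt_of_lt_of_le h (cnt_le_cntY z y a b)
      have hq : 0 < cq z y a b := by
        unfold cq; positivity
      have hcq : cq z y a b = (2:ℝ) ^ Real.logb 2 (cq z y a b) :=
        (Real.rpow_logb (by norm_num) (by norm_num) hq).symm
      rw [hcq, ← Real.rpow_natCast ((2:ℝ) ^ Real.logb 2 (cq z y a b)) (cnt z y (a,b)),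
          ← Real.rpow_mul (by norm_num)]
      congr 1
      unfold cq
      rw [Real.logb_div (by exact_mod_cast h.ne') (by exact_mod_cast hb.ne')]
      ring
  rw [Finset.prod_congr rfl fun ab _ => key ab]
  rw [← Real.rpow_sum_of_pos (by norm_num)]
  congr 1
  rw [Finset.sum_sub_distrib]
  have h2 : ∑ ab : X × Y, (cnt z y ab : ℝ) * Real.logb 2 (cntY y ab.2)
      = ∑ b, (cntY y b : ℝ) * Real.logb 2 (cntY y b) := by
    rw [Fintype.sum_prod_type_right]
    refine Finset.sum_congr rfl fun b _ => ?_
    have hr : ∀ a : X, (cnt z y (a,b) : ℝ) * Real.logb 2 (cntY y ((a, b) : X × Y).2)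
        = (cnt z y (a,b):ℝ) * Real.logb 2 (cntY y b) := fun a => rfl
    rw [Finset.sum_congr rfl fun a _ => hr a, ← Finset.sum_mul, ← Nat.cast_sum, sum_cnt_fst]
  rw [h2, ece_eq hn z y]
  field_simp
  ring

/-- the size of a conditional type class. -/
lemma classCard (hn : 0 < n) (z : Fin n → X) (y : Fin n → Y) :
    (((univ : Finset (Fin n → X)).filter fun x' => ∀ ab, cnt x' y ab = cnt z y ab).card : ℝ)
      ≤ (2:ℝ) ^ ((n:ℝ) * empCondEnt z y) := by
  classical
  set S := (univ : Finset (Fin n → X)).filter fun x' => ∀ ab, cnt x' y ab = cnt z y ab with hS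
  have hval : ∀ x' ∈ S, ∏ i, cq z y (x' i) (y i) = (2:ℝ) ^ (-(n:ℝ) * empCondEnt z y) := by
    intro x' hx'
    rw [prod_cq_eq z x' y]
    simp only [hS, Finset.mem_filter] at hx'
    rw [Finset.prod_congr rfl fun ab _ => by rw [hx'.2 ab]]
    exact prod_cq_self hn z y
  have hle : (S.card : ℝ) * (2:ℝ) ^ (-(n:ℝ) * empCondEnt z y) ≤ 1 := by
    calc (S.card : ℝ) * (2:ℝ) ^ (-(n:ℝ) * empCondEnt z y)
        = ∑ x' ∈ S, ∏ i, cq z y (x' i) (y i) := by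
          rw [Finset.sum_congr rfl hval, Finset.sum_const, nsmul_eq_mul]
      _ ≤ ∑ x' : Fin n → X, ∏ i, cq z y (x' i) (y i) := by
          apply Finset.sum_le_sum_of_subset_of_nonneg (Finset.subset_univ S)
          intro x' _ _
          exact Finset.prod_nonneg fun i _ => cq_nonneg z y (x' i) (y i)
      _ = 1 := sum_prod_cq z y
  have hpos : (0:ℝ) < (2:ℝ) ^ (-(n:ℝ) * empCondEnt z y) := Real.rpow_pos_of_pos (by norm_num) _
  rw [← mul_le_mul_iff_left₀ hpos]
  calc (S.card : ℝ) * (2:ℝ) ^ (-(n:ℝ) * empCondEnt z y) ≤ 1 := hle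
    _ = (2:ℝ) ^ ((n:ℝ) * empCondEnt z y) * (2:ℝ) ^ (-(n:ℝ) * empCondEnt z y) := by
        rw [← Real.rpow_add (by norm_num)]; simp

end auxlemmas2
section auxlemmas3
set_option linter.unusedSectionVars false
open Finset
variable {X Y : Type} [Fintype X] [Fintype Y] {n : ℕ}

lemma cnt_le_n (x : Fin n → X) (y : Fin n → Y) (ab : X × Y) : cnt x y ab ≤ n := by
  calc cnt x y ab ≤ (univ : Finset (Fin n)).card := Finset.card_le_card (Finset.filter_subset _ _)
    _ = n := by simp

/-- number of sequences of conditional empirical entropy at most H. -/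
lemma entSetCard (hn : 0 < n) (y : Fin n → Y) (H : ℝ) :
    (((univ : Finset (Fin n → X)).filter fun x' => empCondEnt x' y ≤ H).card : ℝ)
      ≤ ((n:ℝ)+1) ^ (Fintype.card X * Fintype.card Y) * (2:ℝ) ^ ((n:ℝ) * H) := by
  classical
  set T := (univ : Finset (Fin n → X)).filter fun x' => empCondEnt x' y ≤ H with hT
  set N : (Fin n → X) → (X × Y → Fin (n+1)) :=
    fun x' ab => ⟨cnt x' y ab, Nat.lt_succ_of_le (cnt_le_n x' y ab)⟩ with hN
  have hcard := Finset.card_eq_sum_card_fiberwise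
    (f := N) (s := T) (t := univ) (fun x' _ => mem_univ _)
  have hfiber : ∀ f : X × Y → Fin (n+1),
      ((T.filter fun x' => N x' = f).card : ℝ) ≤ (2:ℝ) ^ ((n:ℝ) * H) := by
    intro f
    rcases Finset.eq_empty_or_nonempty (T.filter fun x' => N x' = f) with h | ⟨z, hz⟩
    · rw [h]
      simp only [Finset.card_empty, Nat.cast_zero]
      positivity
    · simp only [Finset.mem_filter, hT] at hz
      have hsub : (T.filter fun x' => N x' = f)
          ⊆ (univ : Finset (Fin n → X)).filter fun x' => ∀ ab, cnt x' y ab = cnt z y ab := by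
        intro x' hx'
        simp only [Finset.mem_filter] at hx' ⊢
        refine ⟨mem_univ _, fun ab => ?_⟩
        have : N x' ab = N z ab := by rw [hx'.2, hz.2]
        exact congrArg Fin.val this
      calc ((T.filter fun x' => N x' = f).card : ℝ)
          ≤ (((univ : Finset (Fin n → X)).filter
              fun x' => ∀ ab, cnt x' y ab = cnt z y ab).card : ℝ) := by
            exact_mod_cast Finset.card_le_card hsub
        _ ≤ (2:ℝ) ^ ((n:ℝ) * empCondEnt z y) := classCard hn z y
        _ ≤ (2:ℝ) ^ ((n:ℝ) * H) := by
            apply Real.rpow_le_rpow_of_exponent_le (by norm_num)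
            have := hz.1.2
            nlinarith [hz.1.2, hn.le, Nat.cast_nonneg (α := ℝ) n]
  calc (T.card : ℝ) = ∑ f : X × Y → Fin (n+1), ((T.filter fun x' => N x' = f).card : ℝ) := by
        exact_mod_cast hcard
    _ ≤ ∑ _f : X × Y → Fin (n+1), (2:ℝ) ^ ((n:ℝ) * H) :=
        Finset.sum_le_sum fun f _ => hfiber f
    _ = ((n:ℝ)+1) ^ (Fintype.card X * Fintype.card Y) * (2:ℝ) ^ ((n:ℝ) * H) := by
        rw [Finset.sum_const, nsmul_eq_mul]
        congr 1
        rw [Finset.card_univ, Fintype.card_fun, Fintype.card_prod, Fintype.card_fin]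
        push_cast
        ring
end auxlemmas3
set_option maxHeartbeats 1000000 in
/-- a bound on p_A({A : ∃ x' ≠ x with Ax' = Ax and H(x'|y) ≤ H(x|y)})
for an ensemble satisfying (H4). -/
theorem stmt17 {X Y : Type} [Fintype X] [Fintype Y] (n lA : ℕ)
    (𝒜 : Finset ((Fin n → X) → Fin lA → X)) (pA : ((Fin n → X) → Fin lA → X) → ℝ)
    (hnn : ∀ A, 0 ≤ pA A) (hsum : ∑ A ∈ 𝒜, pA A = 1)
    (αA βA : ℝ) (hα : 0 ≤ αA) (hβ : 0 ≤ βA)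
    (hH4 : H4Cond 𝒜 id pA αA βA)
    (x : Fin n → X) (y : Fin n → Y) :
    ∑ A ∈ 𝒜.filter (fun A => ∃ x' : Fin n → X,
        x' ≠ x ∧ A x' = A x ∧ empCondEnt x' y ≤ empCondEnt x y), pA A
      ≤ max (((Fintype.card X : ℝ) ^ lA * αA) / ((ImSet 𝒜 id).card : ℝ)) 1 *
            (2 : ℝ) ^ (-(n : ℝ) *
              (max ((lA : ℝ) * Real.logb 2 (Fintype.card X) / n - empCondEnt x y) 0
                - (Fintype.card X : ℝ) * (Fintype.card Y : ℝ) * Real.logb 2 (n + 1) / n))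
          + βA := by
  classical
  set R : ℝ := (lA : ℝ) * Real.logb 2 (Fintype.card X) / n with hR
  set H : ℝ := empCondEnt x y with hH
  set lam : ℝ := (Fintype.card X : ℝ) * (Fintype.card Y : ℝ) * Real.logb 2 (n + 1) / n with hlam
  set Im : ℝ := ((ImSet 𝒜 id).card : ℝ) with hIm
  set c : ℝ := ((Fintype.card X : ℝ) ^ lA * αA) / Im with hc
  set E : ℝ := -(n : ℝ) * (max (R - H) 0 - lam) with hE
  have hLHS1 : ∑ A ∈ 𝒜.filter (fun A => ∃ x' : Fin n → X,
      x' ≠ x ∧ A x' = A x ∧ empCondEnt x' y ≤ empCondEnt x y), pA A ≤ 1 := by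
    rw [← hsum]
    exact Finset.sum_le_sum_of_subset_of_nonneg (Finset.filter_subset _ _)
      (fun A _ _ => hnn A)
  have hEpos : (0:ℝ) < (2:ℝ) ^ E := Real.rpow_pos_of_pos (by norm_num) _
  have htriv : 0 ≤ E → ∑ A ∈ 𝒜.filter (fun A => ∃ x' : Fin n → X,
      x' ≠ x ∧ A x' = A x ∧ empCondEnt x' y ≤ empCondEnt x y), pA A
        ≤ max c 1 * (2:ℝ) ^ E + βA := by
    intro hEnn
    have h1 : (1:ℝ) ≤ (2:ℝ) ^ E := by
      rw [← Real.rpow_zero 2]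
      exact Real.rpow_le_rpow_of_exponent_le one_le_two hEnn
    have h2 : (1:ℝ) ≤ max c 1 := le_max_right _ _
    calc ∑ A ∈ 𝒜.filter (fun A => ∃ x' : Fin n → X,
        x' ≠ x ∧ A x' = A x ∧ empCondEnt x' y ≤ empCondEnt x y), pA A ≤ 1 := hLHS1
      _ ≤ max c 1 * (2:ℝ) ^ E := by nlinarith
      _ ≤ max c 1 * (2:ℝ) ^ E + βA := by linarith
  rcases Nat.eq_zero_or_pos n with hn0 | hn
  · apply htriv
    rw [hE, hn0]
    simp
  have hlognn : 0 ≤ Real.logb 2 ((n:ℝ) + 1) := by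
    apply Real.logb_nonneg one_lt_two
    have : (0:ℝ) ≤ (n:ℝ) := Nat.cast_nonneg n
    linarith
  have hlamnn : 0 ≤ lam := by
    rw [hlam]
    apply div_nonneg _ (Nat.cast_nonneg n)
    positivity
  rcases lt_or_ge R H with hRH | hRH
  · -- trivial case: R < H, so max (R - H) 0 = 0 and E = n * lam ≥ 0
    apply htriv
    rw [hE, max_eq_right (by linarith : R - H ≤ 0)]
    have : -(n:ℝ) * (0 - lam) = (n:ℝ) * lam := by ring
    rw [this]
    exact mul_nonneg (Nat.cast_nonneg n) hlamnn
  -- main case : 0 < n and H ≤ R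
  have hn' : (0:ℝ) < (n:ℝ) := by exact_mod_cast hn
  have hXne : Nonempty X := ⟨x ⟨0, hn⟩⟩
  have hXpos : (0:ℝ) < (Fintype.card X : ℝ) := by
    exact_mod_cast Fintype.card_pos
  set T : Finset (Fin n → X) :=
    (Finset.univ : Finset (Fin n → X)).filter
      (fun x' => x' ≠ x ∧ empCondEnt x' y ≤ H) with hT
  have hxT : x ∉ T := by simp [hT]
  -- Step A : union bound
  have hstepA : ∑ A ∈ 𝒜.filter (fun A => ∃ x' : Fin n → X,
      x' ≠ x ∧ A x' = A x ∧ empCondEnt x' y ≤ empCondEnt x y), pA A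
        ≤ ∑ x' ∈ T, ∑ A ∈ 𝒜.filter (fun A => A x' = A x), pA A := by
    have hrhs : ∑ x' ∈ T, ∑ A ∈ 𝒜.filter (fun A => A x' = A x), pA A
        = ∑ A ∈ 𝒜, ∑ x' ∈ T, if A x' = A x then pA A else 0 := by
      rw [Finset.sum_comm]
      exact Finset.sum_congr rfl fun x' _ => Finset.sum_filter _ _
    rw [hrhs, Finset.sum_filter]
    apply Finset.sum_le_sum
    intro A _
    by_cases hA : ∃ x' : Fin n → X, x' ≠ x ∧ A x' = A x ∧ empCondEnt x' y ≤ empCondEnt x y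
    · rw [if_pos hA]
      obtain ⟨x', hne, heq, hent⟩ := hA
      have hx'T : x' ∈ T := by simp [hT, hne, hH ▸ hent]
      calc pA A = if A x' = A x then pA A else 0 := by rw [if_pos heq]
        _ ≤ ∑ x'' ∈ T, if A x'' = A x then pA A else 0 :=
            Finset.single_le_sum (f := fun x'' => if A x'' = A x then pA A else 0)
              (fun x'' _ => by by_cases h : A x'' = A x <;> simp [h, hnn A]) hx'T
    · rw [if_neg hA]
      apply Finset.sum_nonneg
      intro x'' _
      by_cases h : A x'' = A x <;> simp [h, hnn A]
  -- Step B : apply (H4)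
  have hstepB : ∑ x' ∈ T, ∑ A ∈ 𝒜.filter (fun A => A x' = A x), pA A
      ≤ (T.card : ℝ) * αA / Im + βA := by
    have h4 := hH4 T {x}
    simp only [id_eq, Finset.filter_congr_decidable, Finset.sum_singleton] at h4
    rw [← hIm] at h4
    have hint : (T ∩ {x}) = ∅ := by
      apply Finset.eq_empty_of_forall_notMem
      intro z hz
      rw [Finset.mem_inter, Finset.mem_singleton] at hz
      exact hxT (hz.2 ▸ hz.1)
    rw [hint] at h4
    simp only [Finset.card_empty, Finset.card_singleton, Nat.cast_zero, Nat.cast_one,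
      mul_one, zero_add] at h4
    have hmin : min (T.card : ℝ) 1 * βA ≤ βA := by
      have := min_le_right (T.card : ℝ) 1
      nlinarith
    calc ∑ x' ∈ T, ∑ A ∈ 𝒜.filter (fun A => A x' = A x), pA A
        ≤ (T.card : ℝ) * αA / Im + min (T.card : ℝ) 1 * βA := by
          convert h4 using 4 with x' hx' 
      _ ≤ (T.card : ℝ) * αA / Im + βA := by linarith
  -- Step C : bound on |T|
  have hstepC : (T.card : ℝ)
      ≤ ((n:ℝ)+1) ^ (Fintype.card X * Fintype.card Y) * (2:ℝ) ^ ((n:ℝ) * H) := by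
    have hsub : T ⊆ (Finset.univ : Finset (Fin n → X)).filter
        (fun x' => empCondEnt x' y ≤ H) := by
      intro z hz
      simp only [hT, Finset.mem_filter] at hz ⊢
      exact ⟨hz.1, hz.2.2⟩
    calc (T.card : ℝ) ≤ (((Finset.univ : Finset (Fin n → X)).filter
          (fun x' => empCondEnt x' y ≤ H)).card : ℝ) := by
          exact_mod_cast Finset.card_le_card hsub
      _ ≤ ((n:ℝ)+1) ^ (Fintype.card X * Fintype.card Y) * (2:ℝ) ^ ((n:ℝ) * H) :=
          entSetCard hn y H
  -- Step D : algebra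
  have hpowX : ((Fintype.card X : ℝ)) ^ lA = (2:ℝ) ^ ((n:ℝ) * R) := by
    have hnR : (n:ℝ) * R = Real.logb 2 (Fintype.card X) * (lA:ℝ) := by
      rw [hR]; field_simp
    rw [hnR, Real.rpow_mul (by norm_num), Real.rpow_logb (by norm_num) (by norm_num) hXpos,
      Real.rpow_natCast]
  have hpowN : ((n:ℝ)+1) ^ (Fintype.card X * Fintype.card Y) = (2:ℝ) ^ ((n:ℝ) * lam) := by
    have hnlam : (n:ℝ) * lam
        = Real.logb 2 ((n:ℝ)+1) * ((Fintype.card X * Fintype.card Y : ℕ) : ℝ) := by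
      rw [hlam]; push_cast; field_simp
    rw [hnlam, Real.rpow_mul (by norm_num),
      Real.rpow_logb (by norm_num) (by norm_num) (by linarith), Real.rpow_natCast]
  have hmaxeq : max (R - H) 0 = R - H := max_eq_left (by linarith)
  have he1 : (2:ℝ) ^ ((n:ℝ) * R) * (2:ℝ) ^ E = (2:ℝ) ^ ((n:ℝ)*lam) * (2:ℝ) ^ ((n:ℝ)*H) := by
    rw [← Real.rpow_add (by norm_num), ← Real.rpow_add (by norm_num), hE, hmaxeq]
    congr 1
    ring
  have hkey : ((n:ℝ)+1) ^ (Fintype.card X * Fintype.card Y) * (2:ℝ) ^ ((n:ℝ) * H) * αA / Im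
      = c * (2:ℝ) ^ E := by
    rw [hpowN, hc, hpowX, ← he1]
    ring
  calc ∑ A ∈ 𝒜.filter (fun A => ∃ x' : Fin n → X,
        x' ≠ x ∧ A x' = A x ∧ empCondEnt x' y ≤ empCondEnt x y), pA A
      ≤ ∑ x' ∈ T, ∑ A ∈ 𝒜.filter (fun A => A x' = A x), pA A := hstepA
    _ ≤ (T.card : ℝ) * αA / Im + βA := hstepB
    _ ≤ ((n:ℝ)+1) ^ (Fintype.card X * Fintype.card Y) * (2:ℝ) ^ ((n:ℝ) * H) * αA / Im
          + βA := by
        have hImnn : (0:ℝ) ≤ Im := by rw [hIm]; positivity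
        have : (T.card : ℝ) * αA / Im
            ≤ ((n:ℝ)+1) ^ (Fintype.card X * Fintype.card Y) * (2:ℝ) ^ ((n:ℝ) * H) * αA / Im := by
          rw [div_eq_mul_inv, div_eq_mul_inv]
          apply mul_le_mul_of_nonneg_right _ (by positivity)
          exact mul_le_mul_of_nonneg_right hstepC hα
        linarith
    _ = c * (2:ℝ) ^ E + βA := by rw [hkey]
    _ ≤ max c 1 * (2:ℝ) ^ E + βA := by
        have : c * (2:ℝ) ^ E ≤ max c 1 * (2:ℝ) ^ E :=
          mul_le_mul_of_nonneg_right (le_max_left c 1) hEpos.le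
        linarith
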